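/- arXiv:0803.3777 — 7 statements merged into one kernel-verified Lean document; each statement's English description precedes it below -/
import Mathlib

section
/- Let R be a finite ring, m, n, M positive integers, and H an m×n matrix over R. For each row index j let I_j denote the support of row j of H, and assume that for every j and every i ∈ I_j the entry H_{j,i} is not a left zero-divisor. For each j and each i ∈ I_j let π_{j,i} be a permutation of {1,…,M}, and let p : {1,…,n} × {1,…,M} → R satisfy, for every j and every t ∈ {1,…,M}, Σ_{i ∈ I_j} H_{j,i} · p(i, π_{j,i}(t)) = 0. For i ∈ {1,…,n} and α ∈ R set f_i^{(α)} = (#{ t ∈ {1,…,M} : p(i,t) = α })/M ∈ ℝ. Then for every row index j and every ℓ ∈ I_j, Σ_{i ∈ I_j \ {ℓ}} Σ_{b ∈ R, b ≠ 0} f_i^{(b)} ≥ Σ_{b ∈ R, b ≠ 0} f_ℓ^{(b)}. -/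
/-!
Write `S_i = {t | p i t ≠ 0}` for the support of the `i`-th row of the lifted word. If
`p ℓ (π ℓ t) ≠ 0`, the lifted check at `t` forces some other `p i (π i t)`, `i ∈ I_j \ {ℓ}`,
to be nonzero, because `H j ℓ` is not a left zero-divisor. Hence `π ℓ⁻¹ S_ℓ` is covered by
the sets `π i⁻¹ S_i`, and since permutations preserve cardinality, `#S_ℓ ≤ ∑ #S_i`. Dividing
by `M` gives the claim, as `∑_{b ≠ 0} f i b = #S_i / M`.
-/

open Finset

lemma exists_ne_zero_of_sum_mul_eq_zero {ι R : Type*} [NonUnitalNonAssocSemiring R]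
    [DecidableEq ι]
    {s : Finset ι} {a x : ι → R} {ℓ : ι} (hℓ : ℓ ∈ s)
    (ha : ∀ r, a ℓ * r = 0 → r = 0) (hsum : ∑ i ∈ s, a i * x i = 0) (hx : x ℓ ≠ 0) :
    ∃ i ∈ s.erase ℓ, x i ≠ 0 := by
  by_contra! hzero
  rw [sum_eq_single_of_mem ℓ hℓ fun i hi hne => by rw [hzero i (mem_erase.2 ⟨hne, hi⟩), mul_zero]]
    at hsum
  exact hx (ha _ hsum)

lemma card_filter_ne_zero_le_sum {ι τ R : Type*} [NonUnitalNonAssocSemiring R] [DecidableEq R]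
    [Fintype τ] [DecidableEq ι] [DecidableEq τ] {s : Finset ι} {a : ι → R} {x : ι → τ → R}
    {ℓ : ι} (hℓ : ℓ ∈ s)
    (ha : ∀ r, a ℓ * r = 0 → r = 0) (hsum : ∀ t, ∑ i ∈ s, a i * x i t = 0) :
    #{t | x ℓ t ≠ 0} ≤ ∑ i ∈ s.erase ℓ, #{t | x i t ≠ 0} := by
  calc #{t | x ℓ t ≠ 0}
      ≤ #((s.erase ℓ).biUnion fun i => {t | x i t ≠ 0}) := by
        refine card_le_card fun t ht => ?_
        obtain ⟨i, hi, hxi⟩ :=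
          exists_ne_zero_of_sum_mul_eq_zero hℓ ha (hsum t) (mem_filter.1 ht).2
        exact mem_biUnion.2 ⟨i, hi, mem_filter.2 ⟨mem_univ t, hxi⟩⟩
    _ ≤ _ := card_biUnion_le

lemma card_filter_ne_zero_comp_perm {τ R : Type*} [Zero R] [DecidableEq R] [Fintype τ]
    (g : τ → R) (σ : Equiv.Perm τ) : #{t | g (σ t) ≠ 0} = #{t | g t ≠ 0} :=
  card_equiv σ fun t => by simp

lemma sum_card_filter_eq_ne_zero {τ R : Type*} [Zero R] [Fintype τ] [Fintype R] [DecidableEq R]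
    (g : τ → R) : ∑ b ∈ univ.filter (fun b : R => b ≠ 0), #{t | g t = b} = #{t | g t ≠ 0} := by
  rw [sum_card_fiberwise_eq_card_filter]
  simp only [mem_filter, mem_univ, true_and]

theorem normalized_pseudocodeword_matrix_check_inequality_general
    {R : Type*} [Ring R] [Fintype R] [DecidableEq R]
    {m n M : ℕ}
    (H : Matrix (Fin m) (Fin n) R)
    (hnzd : ∀ j i, H j i ≠ 0 → ∀ r : R, H j i * r = 0 → r = 0)
    (π : Fin m → Fin n → Equiv.Perm (Fin M))
    (p : Fin n → Fin M → R)
    (hp : ∀ j t, ∑ i ∈ univ.filter (fun i => H j i ≠ 0), H j i * p i ((π j i) t) = 0)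
    (f : Fin n → R → ℝ)
    (hf : ∀ i α, f i α = ((univ.filter (fun t : Fin M => p i t = α)).card : ℝ) / M)
    (j : Fin m) (ℓ : Fin n) (hℓ : H j ℓ ≠ 0) :
    ∑ i ∈ (univ.filter (fun i => H j i ≠ 0)).erase ℓ,
        ∑ b ∈ univ.filter (fun b : R => b ≠ 0), f i b
      ≥ ∑ b ∈ univ.filter (fun b : R => b ≠ 0), f ℓ b := by
  have hmass (i) : ∑ b ∈ univ.filter (fun b : R => b ≠ 0), f i b = (#{t | p i t ≠ 0} : ℝ) / M := by
    simp only [hf, ← sum_div, ← Nat.cast_sum, sum_card_filter_eq_ne_zero]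
  have hcover : #{t | p ℓ t ≠ 0} ≤ ∑ i ∈ (univ.filter (fun i => H j i ≠ 0)).erase ℓ,
      #{t | p i t ≠ 0} := by
    simpa only [card_filter_ne_zero_comp_perm] using card_filter_ne_zero_le_sum
      (x := fun i t => p i (π j i t)) (by simpa using hℓ) (hnzd j ℓ hℓ) (hp j)
  simp only [hmass, ← sum_div, ge_iff_le]
  gcongr
  exact_mod_cast hcover

/-- Corollary (pseudocodeword counting inequality, normalized form):
for a graph-cover pseudocodeword `p` of the code with parity-check matrix `H`
over a finite ring `R` (the `M`-cover being encoded by the permutations `π j i`),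
whose parity-check entries on their supports are not left zero-divisors,
the normalized pseudocodeword matrix entries `f i α = #{t : p i t = α} / M`
satisfy, for every check `j` and every `ℓ` in the support of row `j`,
`∑_{i ∈ I_j \ {ℓ}} ∑_{b ≠ 0} f i b ≥ ∑_{b ≠ 0} f ℓ b`. -/
theorem normalized_pseudocodeword_matrix_check_inequality
    {R : Type*} [Ring R] [Fintype R] [DecidableEq R]
    {m n M : ℕ} (hm : 0 < m) (hn : 0 < n) (hM : 0 < M)
    (H : Matrix (Fin m) (Fin n) R)
    (hnzd : ∀ j i, H j i ≠ 0 → ∀ r : R, H j i * r = 0 → r = 0)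
    (π : Fin m → Fin n → Equiv.Perm (Fin M))
    (p : Fin n → Fin M → R)
    (hp : ∀ j t, ∑ i ∈ univ.filter (fun i => H j i ≠ 0), H j i * p i ((π j i) t) = 0)
    (f : Fin n → R → ℝ)
    (hf : ∀ i α, f i α = ((univ.filter (fun t : Fin M => p i t = α)).card : ℝ) / M)
    (j : Fin m) (ℓ : Fin n) (hℓ : H j ℓ ≠ 0) :
    ∑ i ∈ (univ.filter (fun i => H j i ≠ 0)).erase ℓ,
        ∑ b ∈ univ.filter (fun b : R => b ≠ 0), f i b
      ≥ ∑ b ∈ univ.filter (fun b : R => b ≠ 0), f ℓ b :=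
  normalized_pseudocodeword_matrix_check_inequality_general H hnzd π p hp f hf j ℓ hℓ
end

section
/- Fix an integer q ≥ 2 and an integer n ≥ 1. For each i ∈ {1,…,n}, let f_i(0), …, f_i(q−1) be nonnegative real numbers with Σ_{k=0}^{q−1} f_i(k) = 1, and set x_i = Σ_{k=1}^{q−1} f_i(k). Define V = Σ_{i=1}^{n} ( Σ_{k=0}^{q−1} f_i(k)² + 2 Σ_{0≤k<ℓ≤q−1} f_i(k) f_i(ℓ) cos(2π(k−ℓ)/q) − 2 Σ_{k=0}^{q−1} f_i(k) cos(2πk/q) + 1 ). Then V ≤ 4 Σ_{i=1}^{n} x_i². -/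
/-!
Writing `θₖ = 2πk/q` and `z = ∑ₖ f(k) e^{iθₖ}`, the `i`-th summand of `V` is `|z - 1|²`.
Since the weights sum to one and `θ₀ = 0`, `z - 1 = ∑_{k ≥ 1} f(k) (e^{iθₖ} - 1)`, and each
`|e^{iθₖ} - 1| ≤ 2`, so `|z - 1| ≤ 2 xᵢ`.
-/

open Finset Real

theorem Finset.sum_range_sum_range_of_symm {R : Type*} [NonAssocSemiring R] (q : ℕ)
    (F : ℕ → ℕ → R) (hF : ∀ k l, F k l = F l k) :
    ∑ k ∈ range q, ∑ l ∈ range q, F k l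
      = ∑ k ∈ range q, F k k + 2 * ∑ l ∈ range q, ∑ k ∈ range l, F k l := by
  induction q with
  | zero => simp
  | succ q ih =>
    have hrow : ∑ l ∈ range q, F q l = ∑ k ∈ range q, F k q := sum_congr rfl fun k _ => hF q k
    simp only [sum_range_succ, sum_add_distrib, ih, hrow, two_mul, mul_add]
    abel

theorem Complex.normSq_sum_mul_exp {ι : Type*} (s : Finset ι) (a θ : ι → ℝ) :
    Complex.normSq (∑ k ∈ s, (a k : ℂ) * Complex.exp (θ k * Complex.I))
      = ∑ k ∈ s, ∑ l ∈ s, a k * a l * Real.cos (θ k - θ l) := by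
  simp only [Complex.normSq_apply, Complex.re_sum, Complex.im_sum, Complex.re_ofReal_mul,
    Complex.im_ofReal_mul, Complex.exp_ofReal_mul_I_re, Complex.exp_ofReal_mul_I_im,
    sum_mul_sum, ← sum_add_distrib, Real.cos_sub]
  exact sum_congr rfl fun k _ => sum_congr rfl fun l _ => by ring

theorem norm_sum_mul_sub_one_le {q : ℕ} (a : ℕ → ℝ) (z : ℕ → ℂ) (ha0 : ∀ k < q, 0 ≤ a k)
    (ha1 : ∑ k ∈ range q, a k = 1) (hz : ∀ k, ‖z k‖ ≤ 1) (hz0 : z 0 = 1) :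
    ‖∑ k ∈ range q, (a k : ℂ) * z k - 1‖ ≤ 2 * ∑ k ∈ Ico 1 q, a k := by
  have hshift : ∑ k ∈ range q, (a k : ℂ) * z k - 1 = ∑ k ∈ range q, (a k : ℂ) * (z k - 1) := by
    simp only [mul_sub, mul_one, sum_sub_distrib, ← Complex.ofReal_sum, ha1, Complex.ofReal_one]
  have hdrop : ∑ k ∈ range q, a k * ‖z k - 1‖ = ∑ k ∈ Ico 1 q, a k * ‖z k - 1‖ := by
    refine (sum_subset (fun k hk => ?_) fun k hk hk' => ?_).symm
    · simp only [mem_Ico, mem_range] at hk ⊢; exact hk.2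
    · obtain rfl : k = 0 := by simp only [mem_Ico, mem_range] at hk hk'; omega
      simp [hz0]
  have hunit : ∀ k, ‖z k - 1‖ ≤ 2 := fun k =>
    (norm_sub_le _ _).trans (by rw [norm_one]; linarith [hz k])
  calc ‖∑ k ∈ range q, (a k : ℂ) * z k - 1‖
      ≤ ∑ k ∈ range q, a k * ‖z k - 1‖ := by
        rw [hshift]
        refine (norm_sum_le _ _).trans_eq (sum_congr rfl fun k hk => ?_)
        rw [norm_mul, Complex.norm_of_nonneg (ha0 k (mem_range.mp hk))]
    _ ≤ ∑ k ∈ Ico 1 q, a k * 2 := by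
        rw [hdrop]
        exact sum_le_sum fun k hk =>
          mul_le_mul_of_nonneg_left (hunit k) (ha0 k (mem_Ico.mp hk).2)
    _ = 2 * ∑ k ∈ Ico 1 q, a k := by rw [← sum_mul, mul_comm]

theorem psk_term_eq_normSq (q : ℕ) (g : ℕ → ℝ) :
    ∑ k ∈ range q, g k ^ 2
        + 2 * ∑ l ∈ range q, ∑ k ∈ range l, g k * g l * cos (2 * π * ((k : ℝ) - l) / q)
        - 2 * ∑ k ∈ range q, g k * cos (2 * π * k / q) + 1
      = Complex.normSq
          (∑ k ∈ range q, (g k : ℂ) * Complex.exp ((2 * π * k / q : ℝ) * Complex.I) - 1) := by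
  have hre : (∑ k ∈ range q, (g k : ℂ) * Complex.exp ((2 * π * k / q : ℝ) * Complex.I)).re
      = ∑ k ∈ range q, g k * cos (2 * π * k / q) := by
    simp only [Complex.re_sum, Complex.re_ofReal_mul, Complex.exp_ofReal_mul_I_re]
  simp only [Complex.normSq_sub, map_one, mul_one, hre]
  rw [Complex.normSq_sum_mul_exp, sum_range_sum_range_of_symm]
  · have hdiff : ∀ k l : ℕ, 2 * π * ((k : ℝ) - l) / q = 2 * π * k / q - 2 * π * l / q :=
      fun k l => by ring
    simp only [hdiff, sub_self, cos_zero, mul_one, ← sq]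
    ring
  · intro k l
    rw [← cos_neg, neg_sub]
    ring

theorem V_upper_bound_general {q n : ℕ}
    (f : Fin n → ℕ → ℝ)
    (hf0 : ∀ i, ∀ k < q, 0 ≤ f i k)
    (hf1 : ∀ i, ∑ k ∈ Finset.range q, f i k = 1)
    (x : Fin n → ℝ)
    (hx : ∀ i, x i = ∑ k ∈ Finset.Ico 1 q, f i k)
    (V : ℝ)
    (hV : V = ∑ i, (∑ k ∈ Finset.range q, (f i k) ^ 2
        + 2 * ∑ l ∈ Finset.range q, ∑ k ∈ Finset.range l,
            f i k * f i l * Real.cos (2 * π * ((k : ℝ) - l) / q)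
        - 2 * ∑ k ∈ Finset.range q, f i k * Real.cos (2 * π * k / q) + 1)) :
    V ≤ 4 * ∑ i, (x i) ^ 2 := by
  rw [hV, mul_sum]
  refine sum_le_sum fun i _ => ?_
  have hbound := norm_sum_mul_sub_one_le (f i)
    (fun k => Complex.exp ((2 * π * k / q : ℝ) * Complex.I)) (hf0 i) (hf1 i)
    (fun k => (Complex.norm_exp_ofReal_mul_I _).le) (by simp)
  rw [psk_term_eq_normSq, Complex.normSq_eq_norm_sq, hx i]
  calc _ ≤ (2 * ∑ k ∈ Ico 1 q, f i k) ^ 2 := pow_le_pow_left₀ (norm_nonneg _) hbound 2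
    _ = _ := by ring

/-- Upper bound on the denominator quantity `V` of the squared pseudodistance for
`q`-ary PSK over AWGN: for any normalized pseudocodeword matrix `(f i k)`,
`V ≤ 4 ∑_i x_i²`, where `x_i = ∑_{1 ≤ k < q} f i k`. -/
theorem V_upper_bound {q n : ℕ} (hq : 2 ≤ q) (hn : 1 ≤ n)
    (f : Fin n → ℕ → ℝ)
    (hf0 : ∀ i, ∀ k < q, 0 ≤ f i k)
    (hf1 : ∀ i, ∑ k ∈ Finset.range q, f i k = 1)
    (x : Fin n → ℝ)
    (hx : ∀ i, x i = ∑ k ∈ Finset.Ico 1 q, f i k)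
    (V : ℝ)
    (hV : V = ∑ i, (∑ k ∈ Finset.range q, (f i k) ^ 2
        + 2 * ∑ l ∈ Finset.range q, ∑ k ∈ Finset.range l,
            f i k * f i l * Real.cos (2 * π * ((k : ℝ) - l) / q)
        - 2 * ∑ k ∈ Finset.range q, f i k * Real.cos (2 * π * k / q) + 1)) :
    V ≤ 4 * ∑ i, (x i) ^ 2 :=
  V_upper_bound_general f hf0 hf1 x hx V hV
end

section
/- Fix an integer q ≥ 2 and an integer n ≥ 1. For each i ∈ {1,…,n}, let f_i(0), …, f_i(q−1) be nonnegative real numbers with Σ_{k=0}^{q−1} f_i(k) = 1, and set x_i = Σ_{k=1}^{q−1} f_i(k). Define S = 2 Σ_{i=1}^{n} ( 1 − Σ_{k=0}^{q−1} f_i(k) cos(2πk/q) ) and V = Σ_{i=1}^{n} ( Σ_{k=0}^{q−1} f_i(k)² + 2 Σ_{0≤k<ℓ≤q−1} f_i(k) f_i(ℓ) cos(2π(k−ℓ)/q) − 2 Σ_{k=0}^{q−1} f_i(k) cos(2πk/q) + 1 ). If V > 0, then S²/V ≥ (1 − cos(2π/q))² · (Σ_{i=1}^{n} x_i)² / (Σ_{i=1}^{n}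 x_i²). -/
open Finset Real

/-!
With `ζ = e^{2πi/q}` put `zᵢ = ∑ₖ fᵢ(k) ζᵏ` (`pskMean q (f i)`). The `i`-th summand of `S` is
`2 (1 - Re zᵢ) = 2 ∑_{k ≥ 1} fᵢ(k) (1 - cos (2πk/q)) ≥ 2 (1 - cos (2π/q)) xᵢ`, and that of `V` is
`|zᵢ - 1|² = |∑_{k ≥ 1} fᵢ(k) (ζᵏ - 1)|² ≤ 4 xᵢ²`. Hence `S ≥ 2 (1 - cos (2π/q)) ∑ xᵢ` and
`0 < V ≤ 4 ∑ xᵢ²`, which gives the bound.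
-/

theorem sq_sum_range_eq {R : Type*} [CommSemiring R] (m : ℕ) (g : ℕ → R) :
    (∑ k ∈ range m, g k) ^ 2
      = ∑ k ∈ range m, g k ^ 2 + 2 * ∑ l ∈ range m, ∑ k ∈ range l, g k * g l := by
  induction m with
  | zero => simp
  | succ m ih =>
    rw [sum_range_succ, add_sq, ih, sum_range_succ, sum_range_succ, ← sum_mul]
    ring

theorem norm_sum_ofReal_mul_exp_sq (m : ℕ) (p θ : ℕ → ℝ) :
    ‖∑ k ∈ range m, (p k : ℂ) * Complex.exp (θ k * Complex.I)‖ ^ 2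
      = ∑ k ∈ range m, p k ^ 2
        + 2 * ∑ l ∈ range m, ∑ k ∈ range l, p k * p l * cos (θ k - θ l) := by
  have hdiag (k : ℕ) : p k ^ 2 = (p k * cos (θ k)) ^ 2 + (p k * sin (θ k)) ^ 2 := by
    linear_combination p k ^ 2 * (cos_sq_add_sin_sq (θ k)).symm
  have hcross (k l : ℕ) : p k * p l * cos (θ k - θ l)
      = p k * cos (θ k) * (p l * cos (θ l)) + p k * sin (θ k) * (p l * sin (θ l)) := by
    rw [cos_sub]; ring
  simp only [Complex.sq_norm, Complex.normSq_apply, ← sq, Complex.re_sum, Complex.im_sum,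
    Complex.re_ofReal_mul, Complex.im_ofReal_mul, Complex.exp_ofReal_mul_I_re,
    Complex.exp_ofReal_mul_I_im, sq_sum_range_eq, hdiag, hcross, sum_add_distrib]
  ring

theorem cos_two_pi_mul_div_le {q k : ℕ} (hk : 1 ≤ k) (hkq : k < q) :
    cos (2 * π * k / q) ≤ cos (2 * π / q) := by
  have hq : (0 : ℝ) < q := by exact_mod_cast (by omega : 0 < q)
  have hk' : (1 : ℝ) ≤ k := by exact_mod_cast hk
  have hkq' : (k : ℝ) + 1 ≤ q := by exact_mod_cast hkq
  have hlo : 2 * π / q ≤ 2 * π * k / q :=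
    div_le_div_of_nonneg_right (le_mul_of_one_le_right (by positivity) hk') hq.le
  have hpi : 2 * π / q ≤ π := by
    rw [div_le_iff₀ hq]; nlinarith [pi_pos]
  have hhi : 2 * π * k / q ≤ 2 * π - 2 * π / q := by
    rw [le_sub_iff_add_le, ← add_div, div_le_iff₀ hq]; nlinarith [pi_pos]
  rcases le_total (2 * π * k / q) π with h | h
  · exact cos_le_cos_of_nonneg_of_le_pi (by positivity) h hlo
  · rw [← cos_two_pi_sub]
    exact cos_le_cos_of_nonneg_of_le_pi (by positivity) (by linarith) (by linarith)

theorem Ico_one_eq_erase_range_zero (q : ℕ) : Ico 1 q = (range q).erase 0 := by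
  ext k
  simp only [mem_Ico, mem_erase, mem_range]
  omega

noncomputable def pskMean (q : ℕ) (p : ℕ → ℝ) : ℂ :=
  ∑ k ∈ range q, (p k : ℂ) * Complex.exp ((2 * π * k / q : ℝ) * Complex.I)

section pskMean

variable {q : ℕ} {p : ℕ → ℝ}

theorem re_pskMean : (pskMean q p).re = ∑ k ∈ range q, p k * cos (2 * π * k / q) := by
  simp only [pskMean, Complex.re_sum, Complex.re_ofReal_mul, Complex.exp_ofReal_mul_I_re]

theorem norm_pskMean_sub_one_sq :
    ‖pskMean q p - 1‖ ^ 2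
      = ∑ k ∈ range q, p k ^ 2
        + 2 * ∑ l ∈ range q, ∑ k ∈ range l, p k * p l * cos (2 * π * ((k : ℝ) - l) / q)
        - 2 * ∑ k ∈ range q, p k * cos (2 * π * k / q) + 1 := by
  have hθ (k l : ℕ) : 2 * π * ((k : ℝ) - l) / q = 2 * π * k / q - 2 * π * l / q := by ring
  rw [Complex.sq_norm, Complex.normSq_sub, ← Complex.sq_norm, pskMean,
    norm_sum_ofReal_mul_exp_sq, ← pskMean, Complex.normSq_one]
  simp only [map_one, mul_one, re_pskMean, hθ]
  ring

variable (hp0 : ∀ k < q, 0 ≤ p k) (hp1 : ∑ k ∈ range q, p k = 1)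
include hp0 hp1

theorem one_sub_cos_mul_sum_le_one_sub_re_pskMean :
    (1 - cos (2 * π / q)) * ∑ k ∈ Ico 1 q, p k ≤ 1 - (pskMean q p).re := by
  have hS : 1 - (pskMean q p).re = ∑ k ∈ Ico 1 q, p k * (1 - cos (2 * π * k / q)) := by
    rw [Ico_one_eq_erase_range_zero, sum_erase _ (by simp)]
    simp only [re_pskMean, mul_sub, mul_one, sum_sub_distrib, hp1]
  rw [hS, mul_sum]
  refine sum_le_sum fun k hk => ?_
  obtain ⟨hk1, hkq⟩ := mem_Ico.1 hk
  rw [mul_comm]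
  gcongr
  · exact hp0 k hkq
  · exact cos_two_pi_mul_div_le hk1 hkq

theorem norm_pskMean_sub_one_le : ‖pskMean q p - 1‖ ≤ 2 * ∑ k ∈ Ico 1 q, p k := by
  set e : ℕ → ℂ := fun k => Complex.exp ((2 * π * k / q : ℝ) * Complex.I)
  have hsum : pskMean q p - 1 = ∑ k ∈ Ico 1 q, (p k : ℂ) * (e k - 1) := by
    have h1 : ∑ k ∈ range q, (p k : ℂ) = 1 := by exact_mod_cast hp1
    rw [Ico_one_eq_erase_range_zero, sum_erase (range q) (by simp [e])]
    simp only [mul_sub, mul_one, sum_sub_distrib, h1, pskMean]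
    rfl
  rw [hsum, mul_sum]
  refine (norm_sum_le _ _).trans (sum_le_sum fun k hk => ?_)
  have hpk := hp0 k (mem_Ico.1 hk).2
  have hek : ‖e k - 1‖ ≤ 2 := by
    calc ‖e k - 1‖ ≤ ‖e k‖ + ‖(1 : ℂ)‖ := norm_sub_le _ _
      _ = 2 := by rw [Complex.norm_exp_ofReal_mul_I]; norm_num
  rw [norm_mul, Complex.norm_real, norm_of_nonneg hpk, mul_comm]
  exact mul_le_mul_of_nonneg_right hek hpk

end pskMean

theorem squared_pseudodistance_lower_bound_general {q n : ℕ}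
    (f : Fin n → ℕ → ℝ)
    (hf0 : ∀ i, ∀ k < q, 0 ≤ f i k)
    (hf1 : ∀ i, ∑ k ∈ Finset.range q, f i k = 1)
    (x : Fin n → ℝ)
    (hx : ∀ i, x i = ∑ k ∈ Finset.Ico 1 q, f i k)
    (S V : ℝ)
    (hS : S = 2 * ∑ i, (1 - ∑ k ∈ Finset.range q, f i k * Real.cos (2 * π * k / q)))
    (hV : V = ∑ i, (∑ k ∈ Finset.range q, (f i k) ^ 2
        + 2 * ∑ l ∈ Finset.range q, ∑ k ∈ Finset.range l,
            f i k * f i l * Real.cos (2 * π * ((k : ℝ) - l) / q)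
        - 2 * ∑ k ∈ Finset.range q, f i k * Real.cos (2 * π * k / q) + 1))
    (hVpos : 0 < V) :
    S ^ 2 / V ≥ (1 - Real.cos (2 * π / q)) ^ 2 * (∑ i, x i) ^ 2 / (∑ i, (x i) ^ 2) := by
  set c := 1 - cos (2 * π / q)
  have hS_ge : 2 * (c * ∑ i, x i) ≤ S := by
    rw [hS, mul_sum]
    gcongr with i
    rw [hx i, ← re_pskMean]
    exact one_sub_cos_mul_sum_le_one_sub_re_pskMean (hf0 i) (hf1 i)
  have hV_le : V ≤ 4 * ∑ i, x i ^ 2 := by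
    rw [hV, mul_sum]
    gcongr with i
    rw [← norm_pskMean_sub_one_sq, hx i]
    exact (pow_le_pow_left₀ (norm_nonneg _) (norm_pskMean_sub_one_le (hf0 i) (hf1 i)) 2).trans_eq
      (by ring)
  have hx0 (i : Fin n) : 0 ≤ x i := hx i ▸ sum_nonneg fun k hk => hf0 i k (mem_Ico.1 hk).2
  have hcx : 0 ≤ 2 * (c * ∑ i, x i) :=
    mul_nonneg zero_le_two (mul_nonneg (sub_nonneg.2 (cos_le_one _)) (sum_nonneg fun i _ => hx0 i))
  calc c ^ 2 * (∑ i, x i) ^ 2 / ∑ i, x i ^ 2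
      = (2 * (c * ∑ i, x i)) ^ 2 / (4 * ∑ i, x i ^ 2) := by
        rw [show (2 * (c * ∑ i, x i)) ^ 2 = 4 * (c ^ 2 * (∑ i, x i) ^ 2) by ring,
          mul_div_mul_left _ _ four_ne_zero]
    _ ≤ S ^ 2 / V := div_le_div₀ (sq_nonneg S) (pow_le_pow_left₀ hcx hS_ge 2) hVpos hV_le

/-- Lower bound on the squared pseudodistance `d_q² = S²/V` of a pseudocodeword with
normalized pseudocodeword matrix `(f i k)`, for `q`-ary PSK over AWGN:
`S²/V ≥ (1 − cos(2π/q))² (∑_i x_i)² / (∑_i x_i²)`, where `x_i = ∑_{1 ≤ k < q} f i k`. -/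
theorem squared_pseudodistance_lower_bound {q n : ℕ} (hq : 2 ≤ q) (hn : 1 ≤ n)
    (f : Fin n → ℕ → ℝ)
    (hf0 : ∀ i, ∀ k < q, 0 ≤ f i k)
    (hf1 : ∀ i, ∑ k ∈ Finset.range q, f i k = 1)
    (x : Fin n → ℝ)
    (hx : ∀ i, x i = ∑ k ∈ Finset.Ico 1 q, f i k)
    (S V : ℝ)
    (hS : S = 2 * ∑ i, (1 - ∑ k ∈ Finset.range q, f i k * Real.cos (2 * π * k / q)))
    (hV : V = ∑ i, (∑ k ∈ Finset.range q, (f i k) ^ 2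
        + 2 * ∑ l ∈ Finset.range q, ∑ k ∈ Finset.range l,
            f i k * f i l * Real.cos (2 * π * ((k : ℝ) - l) / q)
        - 2 * ∑ k ∈ Finset.range q, f i k * Real.cos (2 * π * k / q) + 1))
    (hVpos : 0 < V) :
    S ^ 2 / V ≥ (1 - Real.cos (2 * π / q)) ^ 2 * (∑ i, x i) ^ 2 / (∑ i, (x i) ^ 2) :=
  squared_pseudodistance_lower_bound_general f hf0 hf1 x hx S V hS hV hVpos
end

section
/- Let q = 3 and n ≥ 1. For each i ∈ {1,…,n}, let f_i(0), f_i(1), f_i(2) be nonnegative real numbers with f_i(0) + f_i(1) + f_i(2) = 1, and set x_i = f_i(1) + f_i(2). Define S = 2 Σ_{i=1}^{n} ( 1 − Σ_{k=0}^{2} f_i(k) cos(2πk/3) ) and V = Σ_{i=1}^{n} ( Σ_{k=0}^{2} f_i(k)² + 2 Σ_{0≤k<ℓ≤2} f_i(k) f_i(ℓ) cos(2π(k−ℓ)/3) − 2 Σ_{k=0}^{2} f_i(k) cos(2πk/3) + 1 ). If V > 0, then S²/V ≥ 3 · (Σ_{i=1}^{n} x_i)² / (Σ_{i=1}^{n}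 x_i²). (This improves, for q = 3, on the general bound with constant (1 − cos(2π/3))² = 9/4.) -/
open Finset Real

lemma cos_2pi3 : Real.cos (2 * π / 3) = -(1/2) := by
  rw [show 2 * π / 3 = π - π / 3 by ring, Real.cos_pi_sub, Real.cos_pi_div_three]

lemma cos_4pi3 : Real.cos (4 * π / 3) = -(1/2) := by
  rw [show 4 * π / 3 = π + π / 3 by ring, Real.cos_add, Real.cos_pi, Real.sin_pi,
    Real.cos_pi_div_three]
  ring

/-- For ternary (`q = 3`) PSK over AWGN, the squared pseudodistance `d_3² = S²/V` of a
pseudocodeword with normalized pseudocodeword matrix `(f i k)` satisfies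
`S²/V ≥ 3 (∑_i x_i)² / (∑_i x_i²)`, where `x_i = f i 1 + f i 2`.
(This improves on the general bound with constant `(1 − cos(2π/3))² = 9/4`.) -/
theorem squared_pseudodistance_lower_bound_ternary {n : ℕ} (hn : 1 ≤ n)
    (f : Fin n → ℕ → ℝ)
    (hf0 : ∀ i, ∀ k < 3, 0 ≤ f i k)
    (hf1 : ∀ i, f i 0 + f i 1 + f i 2 = 1)
    (x : Fin n → ℝ)
    (hx : ∀ i, x i = f i 1 + f i 2)
    (S V : ℝ)
    (hS : S = 2 * ∑ i, (1 - ∑ k ∈ Finset.range 3, f i k * Real.cos (2 * π * k / 3)))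
    (hV : V = ∑ i, (∑ k ∈ Finset.range 3, (f i k) ^ 2
        + 2 * ∑ l ∈ Finset.range 3, ∑ k ∈ Finset.range l,
            f i k * f i l * Real.cos (2 * π * ((k : ℝ) - l) / 3)
        - 2 * ∑ k ∈ Finset.range 3, f i k * Real.cos (2 * π * k / 3) + 1))
    (hVpos : 0 < V) :
    S ^ 2 / V ≥ 3 * (∑ i, x i) ^ 2 / (∑ i, (x i) ^ 2) := by
  -- evaluate the cosines in S
  have hSterm : ∀ i, (1 - ∑ k ∈ Finset.range 3, f i k * Real.cos (2 * π * k / 3))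
      = 3 / 2 * x i := by
    intro i
    have h1 := hf1 i
    rw [Finset.sum_range_succ, Finset.sum_range_succ, Finset.sum_range_succ,
      Finset.sum_range_zero]
    push_cast
    rw [show 2 * π * 0 / 3 = 0 by ring, Real.cos_zero,
      show 2 * π * 1 / 3 = 2 * π / 3 by ring, cos_2pi3,
      show 2 * π * 2 / 3 = 4 * π / 3 by ring, cos_4pi3, hx i]
    linarith
  have hSval : S = 3 * ∑ i, x i := by
    rw [hS, Finset.sum_congr rfl (fun i _ => hSterm i), ← Finset.mul_sum]
    ring
  -- evaluate V
  have hVterm : ∀ i, (∑ k ∈ Finset.range 3, (f i k) ^ 2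
        + 2 * ∑ l ∈ Finset.range 3, ∑ k ∈ Finset.range l,
            f i k * f i l * Real.cos (2 * π * ((k : ℝ) - l) / 3)
        - 2 * ∑ k ∈ Finset.range 3, f i k * Real.cos (2 * π * k / 3) + 1)
      = 3 * (x i) ^ 2 - 3 * f i 1 * f i 2 := by
    intro i
    have h1 := hf1 i
    simp only [Finset.sum_range_succ, Finset.sum_range_zero]
    push_cast
    rw [show 2 * π * 0 / 3 = 0 by ring, Real.cos_zero,
      show 2 * π * 1 / 3 = 2 * π / 3 by ring, cos_2pi3,
      show 2 * π * 2 / 3 = 4 * π / 3 by ring, cos_4pi3,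
      show 2 * π * ((0 : ℝ) - 1) / 3 = -(2 * π / 3) by ring,
      show 2 * π * ((0 : ℝ) - 2) / 3 = -(4 * π / 3) by ring,
      show 2 * π * ((1 : ℝ) - 2) / 3 = -(2 * π / 3) by ring,
      Real.cos_neg, Real.cos_neg, cos_2pi3, cos_4pi3, hx i,
      show f i 0 = 1 - f i 1 - f i 2 by linarith]
    ring
  have hVle : V ≤ 3 * ∑ i, (x i) ^ 2 := by
    rw [hV, Finset.mul_sum]
    apply Finset.sum_le_sum
    intro i _
    rw [hVterm i]
    have := hf0 i 1 (by norm_num)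
    have := hf0 i 2 (by norm_num)
    nlinarith
  have hxsq : 0 < ∑ i, (x i) ^ 2 := by linarith
  have key : 3 * (∑ i, x i) ^ 2 / (∑ i, (x i) ^ 2) = 9 * (∑ i, x i) ^ 2 / (3 * ∑ i, (x i) ^ 2) := by
    rw [div_eq_div_iff (by positivity) (by positivity)]
    ring
  rw [hSval, key, ge_iff_le, show (3 * ∑ i, x i) ^ 2 = 9 * (∑ i, x i) ^ 2 by ring]
  exact div_le_div_of_nonneg_left (by positivity) hVpos hVle
end

section
/- Let H_s be an m×n real matrix with all entries in {0,1}, such that every column of H_s contains exactly c ones. For each row index j let I_j = { i : (H_s)_{j,i} = 1 }. Let x ∈ ℝⁿ be entrywise nonnegative and assume that for every j and every ℓ ∈ I_j, Σ_{i ∈ I_j \ {ℓ}} x_i ≥ x_ℓ. Let y = x · H_sᵀ, i.e., y_j = Σ_{i ∈ I_j} x_i for each j. Then ‖y‖₂² ≥ 2c · ‖x‖₂², i.e., Σ_{j=1}^{m} ( Σ_{i ∈ I_j} x_i )² ≥ 2c Σ_{i=1}^{n} x_i². -/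
open Finset

/-- Lemma: let `Hs` be an `m × n` 0–1 matrix with exactly `c` ones in each column,
with row supports `I_j = {i : Hs j i = 1}`. If `x ∈ ℝⁿ` is nonnegative and satisfies
the per-check inequalities `∑_{i ∈ I_j \ {ℓ}} x i ≥ x ℓ` for all `j` and `ℓ ∈ I_j`,
then `‖y‖₂² ≥ 2c ‖x‖₂²` for `y = x · Hsᵀ`, i.e.
`∑_j (∑_{i ∈ I_j} x i)² ≥ 2c ∑_i x i²`. -/
theorem norm_y_sq_ge {m n : ℕ} (c : ℕ)
    (Hs : Matrix (Fin m) (Fin n) ℝ)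
    (h01 : ∀ j i, Hs j i = 0 ∨ Hs j i = 1)
    (hcol : ∀ i, (univ.filter (fun j => Hs j i = 1)).card = c)
    (x : Fin n → ℝ) (hx : ∀ i, 0 ≤ x i)
    (hcheck : ∀ j, ∀ ℓ, Hs j ℓ = 1 →
      ∑ i ∈ (univ.filter (fun i => Hs j i = 1)).erase ℓ, x i ≥ x ℓ) :
    ∑ j, (∑ i ∈ univ.filter (fun i => Hs j i = 1), x i) ^ 2
      ≥ 2 * c * ∑ i, (x i) ^ 2 := by
  have key : ∀ j : Fin m, (∑ i ∈ univ.filter (fun i => Hs j i = 1), x i) ^ 2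
      ≥ 2 * ∑ i ∈ univ.filter (fun i => Hs j i = 1), (x i) ^ 2 := by
    intro j
    set S := univ.filter (fun i => Hs j i = 1) with hS
    have hbig : ∀ i ∈ S, 2 * x i ≤ ∑ k ∈ S, x k := by
      intro i hi
      have hmem : Hs j i = 1 := (Finset.mem_filter.mp hi).2
      have h1 := hcheck j i hmem
      have h2 : ∑ k ∈ S, x k = x i + ∑ k ∈ S.erase i, x k :=
        (Finset.add_sum_erase S x hi).symm
      linarith
    have expand : (∑ i ∈ S, x i) ^ 2 = ∑ i ∈ S, x i * (∑ k ∈ S, x k) := by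
      rw [← Finset.sum_mul, sq]
    rw [expand, Finset.mul_sum]
    apply Finset.sum_le_sum
    intro i hi
    have := hbig i hi
    have hxi := hx i
    calc 2 * x i ^ 2 = x i * (2 * x i) := by ring
      _ ≤ x i * (∑ k ∈ S, x k) := by
          exact mul_le_mul_of_nonneg_left this hxi
  have step1 : ∑ j, (∑ i ∈ univ.filter (fun i => Hs j i = 1), x i) ^ 2
      ≥ ∑ j, 2 * ∑ i ∈ univ.filter (fun i => Hs j i = 1), (x i) ^ 2 :=
    Finset.sum_le_sum fun j _ => key j
  have step2 : ∑ j, 2 * ∑ i ∈ univ.filter (fun i => Hs j i = 1), (x i) ^ 2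
      = 2 * c * ∑ i, (x i) ^ 2 := by
    rw [← Finset.mul_sum]
    have : ∑ j, ∑ i ∈ univ.filter (fun i => Hs j i = 1), (x i) ^ 2
        = ∑ i : Fin n, (c : ℝ) * (x i) ^ 2 := by
      simp_rw [Finset.sum_filter]
      rw [Finset.sum_comm]
      refine Finset.sum_congr rfl fun i _ => ?_
      rw [← Finset.sum_filter, Finset.sum_const, hcol i, nsmul_eq_mul]
    rw [this, ← Finset.mul_sum]
    ring
  linarith [step1, step2]
end

section
/- Let H_s be an m×n real matrix with all entries in {0,1}, such that every column contains exactly c ones and every row contains exactly d ones. Let L = H_sᵀ·H_s, let λ₁ = cd (so L·𝟏 = λ₁·𝟏), and let λ₂ be a real number with λ₂ < λ₁ such that v·L·vᵀ ≤ λ₂·‖v‖₂² for every v ∈ ℝⁿ with ⟨v, 𝟏⟩ = 0. For each row index j let I_j = { i : (H_s)_{j,i} = 1 }. Let x ∈ ℝⁿ be entrywise nonnegative, not identically zero, and assume that for every j and every ℓ ∈ I_j, Σ_{i ∈ I_j \ {ℓ}} x_i ≥ x_ℓ. Then ( Σ_{i=1}^{n} x_i )² / ( Σ_{i=1}^{n}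 x_i² ) ≥ n·(2c − λ₂)/(λ₁ − λ₂). -/
/-!
Write `S = ∑ xᵢ`, `Q = ∑ xᵢ²` and `L = Hsᵀ Hs`, so `x ⬝ L x = ‖Hs x‖²`. From below: the check
inequalities give `2 xₗ ≤ ∑_{I_j} xᵢ` on each check, hence `(∑_{I_j} xᵢ)² ≥ 2 ∑_{I_j} xᵢ²`;
summing over checks, every variable is counted `c` times, so `x ⬝ L x ≥ 2c Q`. From above: split
`x = v + (S/n) 𝟏` with `v ⟂ 𝟏`; since `𝟏` is an eigenvector of the symmetric `L` with eigenvalue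
`cd`, the cross terms vanish and `x ⬝ L x = v ⬝ L v + cd S²/n ≤ λ₂ (Q - S²/n) + cd S²/n`.
Comparing the two bounds gives `(2c - λ₂) Q ≤ (cd - λ₂) S²/n`.
-/

open Finset Matrix

theorem two_mul_sum_sq_le_sq_sum {ι : Type*} [DecidableEq ι] {I : Finset ι} {x : ι → ℝ}
    (hx : ∀ i ∈ I, 0 ≤ x i) (h : ∀ ℓ ∈ I, x ℓ ≤ ∑ i ∈ I.erase ℓ, x i) :
    2 * ∑ i ∈ I, x i ^ 2 ≤ (∑ i ∈ I, x i) ^ 2 :=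
  calc 2 * ∑ i ∈ I, x i ^ 2 = ∑ ℓ ∈ I, 2 * x ℓ * x ℓ := by
        rw [Finset.mul_sum]; exact Finset.sum_congr rfl fun ℓ _ => by ring
    _ ≤ ∑ ℓ ∈ I, (∑ i ∈ I, x i) * x ℓ := by
        refine Finset.sum_le_sum fun ℓ hℓ => mul_le_mul_of_nonneg_right ?_ (hx ℓ hℓ)
        linarith [h ℓ hℓ, Finset.add_sum_erase I x hℓ]
    _ = (∑ i ∈ I, x i) ^ 2 := by rw [← Finset.mul_sum, sq]

theorem dotProduct_mulVec_le_of_mulVec_one {ι : Type*} [Fintype ι] {L : Matrix ι ι ℝ}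
    (hL : L.IsSymm) {μ₁ μ₂ : ℝ} (h₁ : L *ᵥ 1 = μ₁ • 1)
    (h₂ : ∀ v : ι → ℝ, ∑ i, v i = 0 → v ⬝ᵥ (L *ᵥ v) ≤ μ₂ * ∑ i, v i ^ 2) (x : ι → ℝ) :
    x ⬝ᵥ (L *ᵥ x) ≤ μ₂ * ∑ i, x i ^ 2 + (μ₁ - μ₂) * (∑ i, x i) ^ 2 / Fintype.card ι := by
  rcases isEmpty_or_nonempty ι with _ | _
  · simp
  set n : ℝ := (Fintype.card ι : ℝ)
  have hn : n ≠ 0 := by positivity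
  set a := (∑ i, x i) / n
  set v := x - a • (1 : ι → ℝ)
  have hv : ∑ i, v i = 0 := by
    simp only [Pi.sub_apply, Pi.smul_apply, Pi.one_apply, smul_eq_mul, mul_one, sum_sub_distrib,
      sum_const, card_univ, nsmul_eq_mul, v, a, n]
    field_simp
    ring
  have hLv : (1 : ι → ℝ) ⬝ᵥ (L *ᵥ v) = 0 := by
    rw [dotProduct_mulVec, ← hL, vecMul_transpose, h₁, smul_dotProduct, one_dotProduct, hv,
      smul_zero]
  have hvL : v ⬝ᵥ (L *ᵥ 1) = 0 := by
    rw [h₁, dotProduct_smul, dotProduct_one, hv, smul_zero]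
  have hquad : x ⬝ᵥ (L *ᵥ x) = v ⬝ᵥ (L *ᵥ v) + μ₁ * n * a ^ 2 := by
    have hx : x = v + a • 1 := by simp [v]
    rw [hx, mulVec_add, mulVec_smul, add_dotProduct, dotProduct_add, dotProduct_add,
      smul_dotProduct, dotProduct_smul, dotProduct_smul, smul_dotProduct, hLv, hvL, h₁,
      dotProduct_smul, one_dotProduct_one]
    simp only [smul_eq_mul]
    ring
  have hnorm : ∑ i, v i ^ 2 = ∑ i, x i ^ 2 - n * a ^ 2 := by
    simp only [v, Pi.sub_apply, Pi.smul_apply, Pi.one_apply, smul_eq_mul, mul_one, sub_sq,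
      Finset.sum_add_distrib, Finset.sum_sub_distrib, ← Finset.sum_mul, ← Finset.mul_sum,
      Finset.sum_const, Finset.card_univ, nsmul_eq_mul, a]
    field_simp
    ring
  have hbound := h₂ v hv
  have ha : (∑ i, x i) ^ 2 / n = n * a ^ 2 := by simp only [a]; field_simp
  rw [hquad, mul_div_assoc, ha]
  rw [hnorm] at hbound
  linear_combination hbound
section ZeroOneMatrix

variable {κ ι : Type*} [Fintype ι] {A : Matrix κ ι ℝ}

theorem mulVec_apply_eq_sum_filter (h01 : ∀ j i, A j i = 0 ∨ A j i = 1) (f : ι → ℝ) (j : κ) :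
    (A *ᵥ f) j = ∑ i ∈ univ.filter (fun i => A j i = 1), f i := by
  rw [Finset.sum_filter]
  refine Finset.sum_congr rfl fun i _ => ?_
  rcases h01 j i with h | h <;> simp [h]

theorem mulVec_one_eq_of_card_filter (h01 : ∀ j i, A j i = 0 ∨ A j i = 1) {d : ℕ}
    (hrow : ∀ j, #(univ.filter (fun i => A j i = 1)) = d) : A *ᵥ 1 = (d : ℝ) • 1 := by
  ext j
  simp [mulVec_apply_eq_sum_filter h01, hrow]

theorem transpose_mul_self_mulVec_one [Fintype κ] (h01 : ∀ j i, A j i = 0 ∨ A j i = 1) {c d : ℕ}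
    (hcol : ∀ i, #(univ.filter (fun j => A j i = 1)) = c)
    (hrow : ∀ j, #(univ.filter (fun i => A j i = 1)) = d) :
    (Aᵀ * A) *ᵥ 1 = ((c : ℝ) * d) • 1 := by
  rw [← mulVec_mulVec, mulVec_one_eq_of_card_filter h01 hrow, mulVec_smul,
    mulVec_one_eq_of_card_filter (A := Aᵀ) (fun i j => h01 j i) hcol, smul_smul, mul_comm]

theorem two_mul_mul_sum_sq_le_dotProduct [Fintype κ] [DecidableEq ι]
    (h01 : ∀ j i, A j i = 0 ∨ A j i = 1) {c : ℕ}
    (hcol : ∀ i, #(univ.filter (fun j => A j i = 1)) = c) {x : ι → ℝ} (hx : ∀ i, 0 ≤ x i)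
    (hcheck : ∀ j, ∀ ℓ, A j ℓ = 1 →
      x ℓ ≤ ∑ i ∈ (univ.filter (fun i => A j i = 1)).erase ℓ, x i) :
    2 * c * ∑ i, x i ^ 2 ≤ x ⬝ᵥ ((Aᵀ * A) *ᵥ x) := by
  have hcolsum : 1 ᵥ* A = (c : ℝ) • 1 := by
    rw [← transpose_transpose A, vecMul_transpose]
    exact mulVec_one_eq_of_card_filter (A := Aᵀ) (fun i j => h01 j i) hcol
  calc 2 * c * ∑ i, x i ^ 2 = 2 * ∑ j, (A *ᵥ fun i => x i ^ 2) j := by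
        rw [← one_dotProduct (A *ᵥ _), dotProduct_mulVec, hcolsum, smul_dotProduct,
          one_dotProduct, smul_eq_mul, mul_assoc]
    _ ≤ ∑ j, (A *ᵥ x) j ^ 2 := by
        rw [Finset.mul_sum]
        refine Finset.sum_le_sum fun j _ => ?_
        rw [mulVec_apply_eq_sum_filter h01, mulVec_apply_eq_sum_filter h01]
        exact two_mul_sum_sq_le_sq_sum (fun i _ => hx i)
          fun ℓ hℓ => hcheck j ℓ (Finset.mem_filter.mp hℓ).2
    _ = x ⬝ᵥ ((Aᵀ * A) *ᵥ x) := by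
        rw [← mulVec_mulVec, dotProduct_mulVec, vecMul_transpose, dotProduct]
        simp only [sq]

end ZeroOneMatrix

/-- Eigenvalue bound (key inequality): let `Hs` be an `m × n` 0–1 matrix with exactly
`c` ones per column and `d` ones per row, `L = Hsᵀ Hs`, `λ₁ = cd`, and `λ₂ < λ₁` an
upper bound for the Rayleigh quotient of `L` on vectors orthogonal to the all-ones
vector. If `x ∈ ℝⁿ` is nonnegative, nonzero, and satisfies the per-check inequalities
`∑_{i ∈ I_j \ {ℓ}} x i ≥ x ℓ` for all `j` and `ℓ ∈ I_j = {i : Hs j i = 1}`, then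
`(∑_i x_i)² / (∑_i x_i²) ≥ n (2c − λ₂)/(λ₁ − λ₂)`. -/
theorem eigenvalue_bound_ratio {m n : ℕ} (c d : ℕ)
    (Hs : Matrix (Fin m) (Fin n) ℝ)
    (h01 : ∀ j i, Hs j i = 0 ∨ Hs j i = 1)
    (hcol : ∀ i, (univ.filter (fun j => Hs j i = 1)).card = c)
    (hrow : ∀ j, (univ.filter (fun i => Hs j i = 1)).card = d)
    (lam2 : ℝ) (hlam2 : lam2 < (c : ℝ) * d)
    (h2 : ∀ v : Fin n → ℝ, ∑ i, v i = 0 →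
      v ⬝ᵥ ((Hsᵀ * Hs) *ᵥ v) ≤ lam2 * ∑ i, (v i) ^ 2)
    (x : Fin n → ℝ) (hx : ∀ i, 0 ≤ x i) (hx0 : x ≠ 0)
    (hcheck : ∀ j, ∀ ℓ, Hs j ℓ = 1 →
      ∑ i ∈ (univ.filter (fun i => Hs j i = 1)).erase ℓ, x i ≥ x ℓ) :
    (∑ i, x i) ^ 2 / (∑ i, (x i) ^ 2)
      ≥ n * (2 * c - lam2) / ((c : ℝ) * d - lam2) := by
  obtain ⟨i₀, hi₀⟩ := Function.ne_iff.mp hx0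
  have hn : (0 : ℝ) < n := Nat.cast_pos.mpr i₀.pos
  have hQ : 0 < ∑ i, x i ^ 2 :=
    Finset.sum_pos' (fun i _ => sq_nonneg _) ⟨i₀, mem_univ i₀, pow_two_pos_of_ne_zero hi₀⟩
  have hupper := dotProduct_mulVec_le_of_mulVec_one (transpose_mul Hsᵀ Hs)
    (transpose_mul_self_mulVec_one h01 hcol hrow) h2 x
  have hlower := two_mul_mul_sum_sq_le_dotProduct h01 hcol hx hcheck
  rw [Fintype.card_fin] at hupper
  have hratio :
      (2 * c - lam2) * (∑ i, x i ^ 2) * n ≤ ((c : ℝ) * d - lam2) * (∑ i, x i) ^ 2 := by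
    rw [← le_div_iff₀ hn]
    linarith
  rw [ge_iff_le, div_le_div_iff₀ (by linarith) hQ]
  linarith
end

section
/- Let K be a p×n real matrix and let x ∈ ℝⁿ be entrywise nonnegative and not identically zero, with K·xᵀ ≥ 0 entrywise. Define the n×n matrix y by y_{(i,i')} = x_i·x_{i'} / (Σ_{r=1}^{n} x_r)². Then: (1) y is entrywise nonnegative; (2) the sum of all entries of y equals 1; (3) K·(yᵀ)_{(i,:)} ≥ 0 and K·y_{(:,i)} ≥ 0 entrywise for every i (i.e., every row and every column of y, viewed as a vector in ℝⁿ, satisfies the inequalities K·v ≥ 0); and (4) Σ_{i=1}^{n} y_{(i,i)} = (Σ_{i=1}^{n} x_i²) / (Σ_{i=1}^{n} x_i)². In particular, y lies in the polytope K₁ = { y ∈ ℝ^{n×n} : y ≥ 0, Σ_{i,i'} y_{(i,i')} = 1, every row and every column v of y satisfies K·vᵀ ≥ 0 }. -/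
open Finset Matrix

/-- Witness construction for the linear-programming bound: let `K` be a `p × n` real
matrix and `x ∈ ℝⁿ` nonnegative, nonzero, with `K x ≥ 0` entrywise. Define the `n × n`
matrix `y` by `y i i' = x i x i' / (∑_r x r)²`. Then `y` is entrywise nonnegative, its
entries sum to `1`, every row and every column `v` of `y` satisfies `K v ≥ 0`
entrywise (so `y` lies in the polytope `K₁`), and its trace equals
`(∑_i x_i²)/(∑_i x_i)²`. -/
theorem lp_witness_construction {p n : ℕ}
    (K : Matrix (Fin p) (Fin n) ℝ)
    (x : Fin n → ℝ) (hx : ∀ i, 0 ≤ x i) (hx0 : x ≠ 0)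
    (hKx : ∀ j, 0 ≤ (K *ᵥ x) j)
    (y : Matrix (Fin n) (Fin n) ℝ)
    (hy : ∀ i i', y i i' = x i * x i' / (∑ r, x r) ^ 2) :
    (∀ i i', 0 ≤ y i i') ∧
    (∑ i, ∑ i', y i i' = 1) ∧
    (∀ i, (∀ j, 0 ≤ (K *ᵥ (fun i' => y i i')) j) ∧
          (∀ j, 0 ≤ (K *ᵥ (fun i' => y i' i)) j)) ∧
    (∑ i, y i i = (∑ i, (x i) ^ 2) / (∑ i, x i) ^ 2) := by
  have hS : 0 < ∑ r, x r := by
    obtain ⟨i, hi⟩ : ∃ i, x i ≠ 0 := by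
      by_contra h
      push_neg at h
      exact hx0 (funext h)
    have : 0 < x i := lt_of_le_of_ne (hx i) (Ne.symm hi)
    exact Finset.sum_pos' (fun r _ => hx r) ⟨i, Finset.mem_univ i, this⟩
  have hS2 : (0:ℝ) < (∑ r, x r) ^ 2 := by positivity
  refine ⟨fun i i' => ?_, ?_, fun i => ⟨fun j => ?_, fun j => ?_⟩, ?_⟩
  · rw [hy]; exact div_nonneg (mul_nonneg (hx i) (hx i')) hS2.le
  · simp only [hy, div_eq_mul_inv, ← Finset.sum_mul, ← Finset.mul_sum]
    rw [← sq, mul_inv_cancel₀ (ne_of_gt hS2)]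
  · have : (K *ᵥ (fun i' => y i i')) j = x i / (∑ r, x r) ^ 2 * (K *ᵥ x) j := by
      simp only [mulVec, dotProduct, hy, Finset.mul_sum]
      congr 1; ext i'; ring
    rw [this]
    exact mul_nonneg (div_nonneg (hx i) hS2.le) (hKx j)
  · have : (K *ᵥ (fun i' => y i' i)) j = x i / (∑ r, x r) ^ 2 * (K *ᵥ x) j := by
      simp only [mulVec, dotProduct, hy, Finset.mul_sum]
      congr 1; ext i'; ring
    rw [this]
    exact mul_nonneg (div_nonneg (hx i) hS2.le) (hKx j)
  · simp only [hy]
    rw [← Finset.sum_div]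
    congr 1
    exact Finset.sum_congr rfl (fun i _ => by ring)
end
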